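/- arXiv:2006.12819 — 8 statements merged into one kernel-verified Lean document; each statement's English description precedes it below -/
import Mathlib

section
/- Let P be a pattern graph with edges numbered e_1, …, e_m. For index i, define the i-th incremental pattern graph ΔP_i by assigning edge e_k type 'either' if k < i, 'delta' if k = i, and 'unaltered' if k > i. An incremental match of ΔP_i in snapshot G_t is a match f of P in G_t such that every edge of type 'delta' is mapped to a delta edge of G_t, every edge of type 'unaltered' is mapped to an unaltered edge, and edges of type 'either' may be mapped to any edge of G_t. Then every subgraph of G_t isomorphic to ΔP_i (i.e., arising from an incremental match of ΔP_i) is a member of ΔR_t^+ = R_{G_t}(P) \ R_{G_{t-1}}(P). -/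
/-- A subgraph of a data graph on vertex type `V`, given by a vertex set and an edge set. -/
structure SubG (V : Type*) where
  verts : Set V
  edges : Set (V × V)

/-- `g` is a subgraph of the graph with edge set `E`. -/
def IsSubgraphOf {V : Type*} (g : SubG V) (E : Set (V × V)) : Prop :=
  g.edges ⊆ E ∧ ∀ e ∈ g.edges, e.1 ∈ g.verts ∧ e.2 ∈ g.verts

/-- `g` is isomorphic to the pattern graph with vertex type `U` and edge set `EP`:
there is an injective match whose pattern edges land in `g.edges`, and the vertex
and edge counts agree. -/
def IsoTo {U V : Type*} (EP : Set (U × U)) (g : SubG V) : Prop :=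
  (∃ f : U → V, Function.Injective f ∧ ∀ p ∈ EP, (f p.1, f p.2) ∈ g.edges) ∧
  g.verts.ncard = Nat.card U ∧ g.edges.ncard = EP.ncard

/-- `R EP E` : the set of subgraphs of the host graph with edge set `E`
that are isomorphic to the pattern with edge set `EP`. -/
def R {U V : Type*} (EP : Set (U × U)) (E : Set (V × V)) : Set (SubG V) :=
  {g | IsSubgraphOf g E ∧ IsoTo EP g}

/-- The data edge that a match `f` assigns to the pattern edge `p`. -/
def mEdge {U V : Type*} (f : U → V) (p : U × U) : V × V := (f p.1, f p.2)

/-- `ΔR_t^{i,±}` : the set of subgraphs of the host with edge set `Eh` that are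
isomorphic to the `i`-th incremental pattern graph `ΔP_i` (relative to the other
snapshot with edge set `Eo`): there is an injective match into `g.edges` sending
the `i`-th pattern edge to a delta edge (`Eh \ Eo`), every later pattern edge to an
unaltered edge (`Eh ∩ Eo`), with matching vertex/edge counts. -/
def DeltaR {U V : Type*} {m : ℕ} (e : Fin m → U × U)
    (Eh Eo : Set (V × V)) (i : Fin m) : Set (SubG V) :=
  {g | IsSubgraphOf g Eh ∧
    (∃ f : U → V, Function.Injective f ∧ (∀ k, mEdge f (e k) ∈ g.edges) ∧
      mEdge f (e i) ∈ Eh \ Eo ∧ ∀ k, i < k → mEdge f (e k) ∈ Eh ∩ Eo) ∧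
    g.verts.ncard = Nat.card U ∧ g.edges.ncard = m}

/-- every subgraph of `G_t` isomorphic to the incremental pattern graph
`ΔP_i` is an appearing match, i.e. lies in `ΔR_t^+ = R_{G_t}(P) \ R_{G_{t-1}}(P)`. -/
theorem stmt1 {U V : Type*} [Finite V] {m : ℕ} (e : Fin m → U × U)
    (he : Function.Injective e) (Eprev Ecur : Set (V × V)) (i : Fin m) (g : SubG V)
    (hg : g ∈ DeltaR e Ecur Eprev i) :
    g ∈ R (Set.range e) Ecur \ R (Set.range e) Eprev := by
  obtain ⟨hsub, ⟨f, hf, hall, hi, hlater⟩, hv, hE⟩ := hg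
  constructor
  · refine ⟨hsub, ⟨⟨f, hf, ?_⟩, hv, ?_⟩⟩
    · rintro p ⟨k, rfl⟩; exact hall k
    · rw [hE, ← Nat.card_coe_set_eq, Nat.card_range_of_injective he, Nat.card_eq_fintype_card, Fintype.card_fin]
  · rintro ⟨⟨hsub', -⟩, -⟩
    exact hi.2 (hsub' (hall i))
end

section
/- With the setup of incremental pattern graphs, every appearing match g ∈ ΔR_t^+ = R_{G_t}(P) \ R_{G_{t-1}}(P) is isomorphic to ΔP_i in G_t for some index i with 1 ≤ i ≤ |E(P)|. Concretely, if x_j is the largest edge index of P whose corresponding edge in g is a delta (inserting) edge, then g is isomorphic to ΔP_{x_j}. -/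
/-- every appearing match `g ∈ ΔR_t^+` is isomorphic to `ΔP_i` for some `i`;
concretely, for any match `f` of `P` in `g`, if `i` is the largest edge index mapped by
`f` to a delta (inserting) edge, then `g` is isomorphic to `ΔP_i`. -/
theorem stmt2 {U V : Type*} [Finite V] {m : ℕ} (e : Fin m → U × U)
    (he : Function.Injective e) (Eprev Ecur : Set (V × V)) (g : SubG V)
    (hg : g ∈ R (Set.range e) Ecur \ R (Set.range e) Eprev) :
    (∃ i : Fin m, g ∈ DeltaR e Ecur Eprev i) ∧
    (∀ f : U → V, Function.Injective f → (∀ k, mEdge f (e k) ∈ g.edges) →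
      ∀ i : Fin m, mEdge f (e i) ∈ Ecur \ Eprev →
        (∀ k, mEdge f (e k) ∈ Ecur \ Eprev → k ≤ i) →
        g ∈ DeltaR e Ecur Eprev i) := by
  classical
  obtain ⟨⟨hsub, hiso⟩, hnot⟩ := hg
  obtain ⟨⟨f0, hf0inj, hf0e⟩, hverts, hedges⟩ := hiso
  have hrange : (Set.range e).ncard = m := by
    rw [← Nat.card_coe_set_eq, Nat.card_range_of_injective he]
    simp
  have hgE : g.edges.ncard = m := by rw [hedges, hrange]
  have hfin : g.edges.Finite := Set.toFinite _
  have part2 : ∀ f : U → V, Function.Injective f → (∀ k, mEdge f (e k) ∈ g.edges) →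
      ∀ i : Fin m, mEdge f (e i) ∈ Ecur \ Eprev →
        (∀ k, mEdge f (e k) ∈ Ecur \ Eprev → k ≤ i) →
        g ∈ DeltaR e Ecur Eprev i := by
    intro f hf hfe i hi hmax
    refine ⟨hsub, ⟨f, hf, hfe, hi, ?_⟩, hverts, hgE⟩
    intro k hik
    refine ⟨hsub.1 (hfe k), ?_⟩
    by_contra hk
    exact absurd (hmax k ⟨hsub.1 (hfe k), hk⟩) (not_le.mpr hik)
  refine ⟨?_, part2⟩
  have hfe0 : ∀ k, mEdge f0 (e k) ∈ g.edges := fun k => hf0e (e k) ⟨k, rfl⟩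
  have hmerinj : Function.Injective (mEdge f0) := by
    intro a b hab
    simp only [mEdge, Prod.mk.injEq] at hab
    exact Prod.ext (hf0inj hab.1) (hf0inj hab.2)
  have himg : mEdge f0 '' Set.range e ⊆ g.edges := by
    rintro _ ⟨p, ⟨k, rfl⟩, rfl⟩
    exact hfe0 k
  have heq : g.edges = mEdge f0 '' Set.range e := by
    refine (Set.eq_of_subset_of_ncard_le himg ?_ hfin).symm
    rw [Set.ncard_image_of_injective _ hmerinj, hrange, hgE]
  have hnotsub : ¬ g.edges ⊆ Eprev := by
    intro hss
    exact hnot ⟨⟨hss, hsub.2⟩, ⟨f0, hf0inj, hf0e⟩, hverts, hedges⟩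
  obtain ⟨d, hd, hdnp⟩ := Set.not_subset.mp hnotsub
  rw [heq] at hd
  obtain ⟨p, ⟨k0, rfl⟩, rfl⟩ := hd
  have hk0 : mEdge f0 (e k0) ∈ Ecur \ Eprev := ⟨hsub.1 (hfe0 k0), hdnp⟩
  set S : Finset (Fin m) := Finset.univ.filter (fun k => mEdge f0 (e k) ∈ Ecur \ Eprev)
    with hS
  have hne : S.Nonempty := ⟨k0, by simp only [hS, Finset.mem_filter, Finset.mem_univ, true_and]; exact hk0⟩
  refine ⟨S.max' hne, part2 f0 hf0inj hfe0 _ ?_ ?_⟩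
  · have := S.max'_mem hne
    simpa [hS] using this
  · intro k hk
    exact S.le_max' k (by simp only [hS, Finset.mem_filter, Finset.mem_univ, true_and]; exact hk)
end

section
/- With the incremental pattern graph setup, the set of appearing matches decomposes exactly as ΔR_t^+ = ⋃_{i=1}^{m} ΔR_t^{i,+}, where ΔR_t^{i,+} is the set of subgraphs of G_t isomorphic to the i-th incremental pattern graph ΔP_i and m = |E(P)|. Symmetrically, ΔR_t^- = ⋃_{i=1}^{m} ΔR_t^{i,-} for the disappearing matches in snapshot G_{t-1}. -/
lemma mEdge_inj {U V : Type*} {f : U → V} (hf : Function.Injective f) :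
    Function.Injective (mEdge f) := by
  rintro ⟨a, b⟩ ⟨c, d⟩ h
  simp only [mEdge, Prod.mk.injEq] at h ⊢
  exact ⟨hf h.1, hf h.2⟩

lemma ncard_range' {V : Type*} {m : ℕ} {h : Fin m → V} (hi : Function.Injective h) :
    (Set.range h).ncard = m := by
  rw [← Nat.card_coe_set_eq, Nat.card_range_of_injective hi, Nat.card_eq_fintype_card,
    Fintype.card_fin]

lemma key {U V : Type*} [Finite V] {m : ℕ} (e : Fin m → U × U)
    (he : Function.Injective e) (Eh Eo : Set (V × V)) :
    R (Set.range e) Eh \ R (Set.range e) Eo = ⋃ i : Fin m, DeltaR e Eh Eo i := by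
  ext g
  simp only [Set.mem_diff, Set.mem_iUnion, R, DeltaR, Set.mem_setOf_eq, IsoTo]
  constructor
  · rintro ⟨⟨hsub, ⟨f, hf, hfe⟩, hv, hec⟩, hnot⟩
    have hek : ∀ k, mEdge f (e k) ∈ g.edges := fun k => hfe (e k) ⟨k, rfl⟩
    have hinj : Function.Injective (fun k => mEdge f (e k)) :=
      (mEdge_inj hf).comp he
    have hgfin : g.edges.Finite := Set.toFinite _
    have hedges : g.edges = Set.range (fun k => mEdge f (e k)) := by
      refine (Set.eq_of_subset_of_ncard_le ?_ ?_ hgfin).symm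
      · rintro x ⟨k, rfl⟩; exact hek k
      · rw [ncard_range' hinj, hec, ncard_range' he]
    have hnsub : ¬ g.edges ⊆ Eo := by
      intro hs
      exact hnot ⟨⟨hs, hsub.2⟩, ⟨f, hf, hfe⟩, hv, hec⟩
    obtain ⟨x, hx, hxo⟩ := Set.not_subset.mp hnsub
    rw [hedges] at hx
    obtain ⟨k0, rfl⟩ := hx
    classical
    set S : Finset (Fin m) := Finset.univ.filter (fun k => mEdge f (e k) ∉ Eo) with hS
    have hk0S : k0 ∈ S := by simp [hS, hxo]
    have hSne : S.Nonempty := ⟨k0, hk0S⟩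
    refine ⟨S.max' hSne, hsub, ⟨f, hf, hek, ⟨hsub.1 (hek _), ?_⟩, ?_⟩, hv, ?_⟩
    · have := S.max'_mem hSne
      simp only [hS, Finset.mem_filter] at this
      exact this.2
    · intro k hk
      refine ⟨hsub.1 (hek k), ?_⟩
      by_contra hko
      exact absurd (S.le_max' k (by simp [hS, hko])) (not_le.mpr hk)
    · rw [hec, ncard_range' he]
  · rintro ⟨i, hsub, ⟨f, hf, hek, hdelta, hlater⟩, hv, hec⟩
    refine ⟨⟨hsub, ⟨f, hf, ?_⟩, hv, by rw [hec, ncard_range' he]⟩, ?_⟩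
    · rintro p ⟨k, rfl⟩; exact hek k
    · rintro ⟨⟨hso, _⟩, _⟩
      exact hdelta.2 (hso (hek i))

/-- the appearing matches decompose as the union over `i` of the matching
results of the incremental pattern graphs in `G_t`, and symmetrically for the
disappearing matches in `G_{t-1}`. -/
theorem stmt3 {U V : Type*} [Finite V] {m : ℕ} (e : Fin m → U × U)
    (he : Function.Injective e) (Eprev Ecur : Set (V × V)) :
    (R (Set.range e) Ecur \ R (Set.range e) Eprev
      = ⋃ i : Fin m, DeltaR e Ecur Eprev i) ∧
    (R (Set.range e) Eprev \ R (Set.range e) Ecur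
      = ⋃ i : Fin m, DeltaR e Eprev Ecur i) := by
  exact ⟨key e he Ecur Eprev, key e he Eprev Ecur⟩
end

section
/- With the incremental pattern graph setup, the matching result sets of distinct incremental pattern graphs are pairwise disjoint: for all 1 ≤ a < b ≤ |E(P)|, ΔR_t^{a,+} ∩ ΔR_t^{b,+} = ∅ and ΔR_t^{a,-} ∩ ΔR_t^{b,-} = ∅. -/
/-- An order-respecting match of the numbered pattern into the subgraph `g`:
injective, sends every pattern edge into `g.edges`, and respects the
symmetry-breaking partial order `ltP` on pattern vertices w.r.t. the total
order `prec` on data vertices. -/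
def OrdMatchInto {U V : Type*} {m : ℕ} (e : Fin m → U × U)
    (ltP : U → U → Prop) (prec : V → V → Prop) (g : SubG V) (f : U → V) : Prop :=
  Function.Injective f ∧ (∀ k, mEdge f (e k) ∈ g.edges) ∧
  ∀ a b, ltP a b → prec (f a) (f b)

/-- `ΔR_t^{i,±}` with order-respecting (symmetry-breaking) incremental matches. -/
def DeltaROrd {U V : Type*} {m : ℕ} (e : Fin m → U × U)
    (ltP : U → U → Prop) (prec : V → V → Prop)
    (Eh Eo : Set (V × V)) (i : Fin m) : Set (SubG V) :=
  {g | IsSubgraphOf g Eh ∧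
    (∃ f : U → V, OrdMatchInto e ltP prec g f ∧
      mEdge f (e i) ∈ Eh \ Eo ∧ ∀ k, i < k → mEdge f (e k) ∈ Eh ∩ Eo) ∧
    g.verts.ncard = Nat.card U ∧ g.edges.ncard = m}

lemma deltaROrd_disjoint {U V : Type*} {m : ℕ} (e : Fin m → U × U)
    (ltP : U → U → Prop) (prec : V → V → Prop) (Eh Eo : Set (V × V))
    (hUnique : ∀ g : SubG V, ∀ f f' : U → V,
      OrdMatchInto e ltP prec g f → OrdMatchInto e ltP prec g f' → f = f')
    (a b : Fin m) (hab : a < b) :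
    DeltaROrd e ltP prec Eh Eo a ∩ DeltaROrd e ltP prec Eh Eo b = ∅ := by
  ext g
  simp only [Set.mem_inter_iff, Set.mem_empty_iff_false, iff_false]
  rintro ⟨⟨_, ⟨f, hf, _, hlater⟩, _⟩, ⟨_, ⟨f', hf', hdelta', _⟩, _⟩⟩
  have hff' : f = f' := hUnique g f f' hf hf'
  subst hff'
  exact (hdelta'.2 (hlater b hab).2).elim

/-- under the symmetry-breaking property (each subgraph admits at most one
order-respecting match of `P`), the matching result sets of distinct incremental
pattern graphs are pairwise disjoint, both for `G_t` and for `G_{t-1}`. -/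
theorem stmt4 {U V : Type*} [Finite V] {m : ℕ} (e : Fin m → U × U)
    (he : Function.Injective e) (ltP : U → U → Prop) (prec : V → V → Prop)
    (Eprev Ecur : Set (V × V))
    (hUnique : ∀ g : SubG V, ∀ f f' : U → V,
      OrdMatchInto e ltP prec g f → OrdMatchInto e ltP prec g f' → f = f') :
    ∀ a b : Fin m, a < b →
      DeltaROrd e ltP prec Ecur Eprev a ∩ DeltaROrd e ltP prec Ecur Eprev b = ∅ ∧
      DeltaROrd e ltP prec Eprev Ecur a ∩ DeltaROrd e ltP prec Eprev Ecur b = ∅ := by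
  intro a b hab
  exact ⟨deltaROrd_disjoint e ltP prec Ecur Eprev hUnique a b hab,
    deltaROrd_disjoint e ltP prec Eprev Ecur hUnique a b hab⟩
end

section
/- Let g ∈ R_{G_t}(P) \ R_{G_{t-1}}(P) be an appearing match and suppose (via symmetry breaking) g has a unique order-respecting match f of P. Number the edges of g according to P through f. If {x_1 < x_2 < … < x_j} are the indices of the edges of g that are inserting (delta) edges of G_t, then j ≥ 1, and f is an incremental match of ΔP_{x_j} in G_t but f is NOT an incremental match of ΔP_i for any i > x_j. -/
/-- An incremental match of `ΔP_i` in the snapshot with edge set `Eh` (relative to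
the other snapshot `Eo`). -/
def IncMatch {U V : Type*} {m : ℕ} (e : Fin m → U × U)
    (Eh Eo : Set (V × V)) (i : Fin m) (f : U → V) : Prop :=
  Function.Injective f ∧ (∀ k, mEdge f (e k) ∈ Eh) ∧
  mEdge f (e i) ∈ Eh \ Eo ∧ ∀ k, i < k → mEdge f (e k) ∈ Eh ∩ Eo

/-- for an appearing match `g` with a match `f` of `P` in `g`, some edge
of `g` is an inserting (delta) edge; and if `xj` is the largest pattern-edge index
mapped to a delta edge, then `f` is an incremental match of `ΔP_{xj}` in `G_t` but
not an incremental match of `ΔP_i` for any `i > xj`. -/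
theorem stmt7 {U V : Type*} [Finite V] {m : ℕ} (e : Fin m → U × U)
    (he : Function.Injective e) (Eprev Ecur : Set (V × V)) (g : SubG V)
    (hg : g ∈ R (Set.range e) Ecur \ R (Set.range e) Eprev)
    (f : U → V) (hfinj : Function.Injective f)
    (hfe : ∀ k, mEdge f (e k) ∈ g.edges) :
    (∃ k : Fin m, mEdge f (e k) ∈ Ecur \ Eprev) ∧
    (∀ xj : Fin m, mEdge f (e xj) ∈ Ecur \ Eprev →
      (∀ k, mEdge f (e k) ∈ Ecur \ Eprev → k ≤ xj) →
      IncMatch e Ecur Eprev xj f ∧ ∀ i : Fin m, xj < i → ¬ IncMatch e Ecur Eprev i f) := by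
  obtain ⟨⟨hsubC, hisoC⟩, hnot⟩ := hg
  have hgE : g.edges ⊆ Ecur := hsubC.1
  -- the image of the pattern edges under f is exactly g.edges
  have hminj : Function.Injective (mEdge f) := by
    intro p q h
    have h1 : f p.1 = f q.1 := congrArg Prod.fst h
    have h2 : f p.2 = f q.2 := congrArg Prod.snd h
    exact Prod.ext (hfinj h1) (hfinj h2)
  have hsub : mEdge f '' Set.range e ⊆ g.edges := by
    rintro x ⟨p, ⟨k, rfl⟩, rfl⟩
    exact hfe k
  have hfin : g.edges.Finite := Set.toFinite _
  have hcard : g.edges.ncard ≤ (mEdge f '' Set.range e).ncard := by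
    rw [Set.ncard_image_of_injective _ hminj, ← hisoC.2.2]
  have hEq : mEdge f '' Set.range e = g.edges :=
    Set.eq_of_subset_of_ncard_le hsub hcard hfin
  -- first part
  have hex : ∃ k : Fin m, mEdge f (e k) ∈ Ecur \ Eprev := by
    by_contra hcon
    push_neg at hcon
    have hall : ∀ k, mEdge f (e k) ∈ Eprev := by
      intro k
      by_contra hk
      exact hcon k ⟨hgE (hfe k), hk⟩
    apply hnot
    refine ⟨⟨?_, hsubC.2⟩, ⟨f, hfinj, ?_⟩, hisoC.2⟩
    · intro x hx
      rw [← hEq] at hx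
      obtain ⟨p, ⟨k, rfl⟩, rfl⟩ := hx
      exact hall k
    · rintro p ⟨k, rfl⟩
      exact hfe k
  refine ⟨hex, ?_⟩
  intro xj hxj hmax
  constructor
  · refine ⟨hfinj, fun k => hgE (hfe k), hxj, ?_⟩
    intro k hk
    refine ⟨hgE (hfe k), ?_⟩
    by_contra hkp
    exact absurd (hmax k ⟨hgE (hfe k), hkp⟩) (not_le.mpr hk)
  · intro i hi hIM
    exact absurd (hmax i hIM.2.2.1) (not_le.mpr hi)
end

section
/- Let P be a pattern graph with a syntactic equivalence u_i ≃ u_j (i.e., Γ_P(u_i) \ {u_j} = Γ_P(u_j) \ {u_i}). For any matching order O (a permutation of V(P)), let O' be obtained by swapping u_i and u_j in O. Then for every prefix length k, the partial pattern graph induced by the first k vertices of O is isomorphic to the partial pattern graph induced by the first k vertices of O'. -/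
lemma swap_adj {U : Type*} [DecidableEq U] (P : SimpleGraph U) (ui uj : U)
    (hse : P.neighborSet ui \ {uj} = P.neighborSet uj \ {ui}) :
    ∀ a b : U, P.Adj a b → P.Adj (Equiv.swap ui uj a) (Equiv.swap ui uj b) := by
  have key : ∀ v : U, v ≠ ui → v ≠ uj → (P.Adj ui v ↔ P.Adj uj v) := by
    intro v hvi hvj
    have h := Set.ext_iff.mp hse v
    simp only [Set.mem_diff, SimpleGraph.mem_neighborSet, Set.mem_singleton_iff] at h
    constructor
    · intro ha; exact ((h.mp ⟨ha, hvj⟩).1)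
    · intro ha; exact ((h.mpr ⟨ha, hvi⟩).1)
  intro a b hab
  have hswap : ∀ v : U, v ≠ ui → v ≠ uj → Equiv.swap ui uj v = v := fun v h1 h2 =>
    Equiv.swap_apply_of_ne_of_ne h1 h2
  rcases eq_or_ne a ui with hai | hai
  · rcases eq_or_ne b ui with hbi | hbi
    · exact absurd (hai.trans hbi.symm) hab.ne
    · rcases eq_or_ne b uj with hbj | hbj
      · rw [hai, hbj, Equiv.swap_apply_left, Equiv.swap_apply_right]
        rw [hai, hbj] at hab; exact hab.symm
      · rw [hai, Equiv.swap_apply_left, hswap b hbi hbj]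
        rw [hai] at hab; exact (key b hbi hbj).mp hab
  · rcases eq_or_ne a uj with haj | haj
    · rcases eq_or_ne b ui with hbi | hbi
      · rw [haj, hbi, Equiv.swap_apply_left, Equiv.swap_apply_right]
        rw [haj, hbi] at hab; exact hab.symm
      · rcases eq_or_ne b uj with hbj | hbj
        · exact absurd (haj.trans hbj.symm) hab.ne
        · rw [haj, Equiv.swap_apply_right, hswap b hbi hbj]
          rw [haj] at hab; exact (key b hbi hbj).mpr hab
    · rcases eq_or_ne b ui with hbi | hbi
      · rw [hbi, Equiv.swap_apply_left, hswap a hai haj]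
        rw [hbi] at hab
        exact ((key a hai haj).mp hab.symm).symm
      · rcases eq_or_ne b uj with hbj | hbj
        · rw [hbj, Equiv.swap_apply_right, hswap a hai haj]
          rw [hbj] at hab
          exact ((key a hai haj).mpr hab.symm).symm
        · rwa [hswap a hai haj, hswap b hbi hbj]

/-- if `u_i ≃ u_j` are syntactically equivalent vertices of the pattern
graph `P`, then for any matching order `O` and its dual `O'` (obtained by swapping
`u_i` and `u_j`), the partial pattern graphs induced by the first `k` vertices of
`O` and of `O'` are isomorphic, for every prefix length `k`. -/
theorem stmt8 {U : Type*} [Fintype U] [DecidableEq U] (P : SimpleGraph U)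
    (ui uj : U)
    (hse : P.neighborSet ui \ {uj} = P.neighborSet uj \ {ui})
    (n : ℕ) (O : Fin n → U) (hO : Function.Bijective O) (k : ℕ) :
    Nonempty
      ((P.induce (O '' {t : Fin n | (t : ℕ) < k})) ≃g
       (P.induce ((Equiv.swap ui uj ∘ O) '' {t : Fin n | (t : ℕ) < k}))) := by
  set f := Equiv.swap ui uj
  set S := O '' {t : Fin n | (t : ℕ) < k}
  have himg : (f ∘ O) '' {t : Fin n | (t : ℕ) < k} = f '' S := by
    rw [Set.image_comp]
  have hiff : ∀ a b : U, P.Adj (f a) (f b) ↔ P.Adj a b := by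
    intro a b
    constructor
    · intro h
      have := swap_adj P ui uj hse _ _ h
      simpa [f, Equiv.swap_apply_self] using this
    · exact swap_adj P ui uj hse a b
  refine ⟨?_⟩
  rw [himg]
  exact
    { toEquiv := Equiv.Set.image f S f.injective
      map_rel_iff' := by
        intro a b
        simp only [SimpleGraph.comap_adj, Function.Embedding.coe_subtype,
          Equiv.Set.image_apply]
        exact hiff a b }
end

section
/- Let P be a pattern graph with m edges and consider two time steps with snapshots G_{t-1}, G_t. Define ΔR_t^{i,+} as the set of subgraphs of G_t isomorphic to incremental pattern graph ΔP_i. Then |ΔR_t^+| = Σ_{i=1}^{m} |ΔR_t^{i,+}|, i.e., the number of appearing matches equals the sum over i of the numbers of subgraphs isomorphic to each incremental pattern graph (combining the union identity with pairwise disjointness). -/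
instance {V : Type*} [Finite V] : Finite (SubG V) :=
  Finite.of_injective (fun g => (g.verts, g.edges)) (by
    rintro ⟨a, b⟩ ⟨c, d⟩ h
    simpa [Prod.ext_iff] using h)

theorem aux_ncard_iUnion {α : Type*} [Finite α] : ∀ {n : ℕ} (s : Fin n → Set α),
    (Pairwise fun i j => Disjoint (s i) (s j)) →
    (⋃ i, s i).ncard = ∑ i, (s i).ncard := by
  intro n
  induction n with
  | zero => intro s _; simp
  | succ n ih =>
    intro s hdisj
    have hdecomp : (⋃ i, s i) = s 0 ∪ ⋃ i : Fin n, s i.succ := by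
      ext x
      simp only [Set.mem_iUnion, Set.mem_union]
      constructor
      · rintro ⟨i, hi⟩
        rcases Fin.eq_zero_or_eq_succ i with h | ⟨j, rfl⟩
        · left; rwa [h] at hi
        · right; exact ⟨j, hi⟩
      · rintro (h | ⟨j, hj⟩)
        exacts [⟨0, h⟩, ⟨j.succ, hj⟩]
    have hd : Disjoint (s 0) (⋃ i : Fin n, s i.succ) :=
      Set.disjoint_iUnion_right.2 fun i => (hdisj (Fin.succ_ne_zero i).symm)
    rw [hdecomp, Set.ncard_union_eq hd (Set.toFinite _) (Set.toFinite _),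
      ih (fun i => s i.succ) (fun i j hij => hdisj fun h => hij (Fin.succ_inj.mp h)),
      Fin.sum_univ_succ]

/-- under the symmetry-breaking property (every subgraph of `G_t`
isomorphic to `P` admits exactly one order-respecting match), the number of appearing
matches equals the sum over `i` of the numbers of subgraphs isomorphic to the
incremental pattern graphs `ΔP_i`. -/
theorem stmt16 {U V : Type*} [Finite U] [Finite V] {m : ℕ} (e : Fin m → U × U)
    (he : Function.Injective e) (ltP : U → U → Prop) (prec : V → V → Prop)
    (Eprev Ecur : Set (V × V))
    (hUnique : ∀ g ∈ R (Set.range e) Ecur,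
      ∃! f : U → V, OrdMatchInto e ltP prec g f) :
    (R (Set.range e) Ecur \ R (Set.range e) Eprev).ncard =
      ∑ i : Fin m, (DeltaROrd e ltP prec Ecur Eprev i).ncard := by
  classical
  set S : Fin m → Set (SubG V) := DeltaROrd e ltP prec Ecur Eprev with hS
  have hm : (Set.range e).ncard = m := by
    rw [← Set.image_univ, Set.ncard_image_of_injective _ he, Set.ncard_univ,
      Nat.card_eq_fintype_card, Fintype.card_fin]
  have hSsub : ∀ i, S i ⊆ R (Set.range e) Ecur := by
    rintro i g ⟨hsub, ⟨f, ⟨hinj, hedges, hord⟩, hdelta, hlater⟩, hv, hE⟩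
    refine ⟨hsub, ⟨f, hinj, ?_⟩, hv, ?_⟩
    · rintro p ⟨k, rfl⟩; exact hedges k
    · rw [hm]; exact hE
  have key : ∀ g ∈ R (Set.range e) Ecur, ∀ f, OrdMatchInto e ltP prec g f →
      g.edges = mEdge f '' Set.range e := by
    rintro g ⟨hsub, ⟨f0, hf0⟩, hv, hE⟩ f ⟨hinj, hedges, _⟩
    have hsubset : mEdge f '' Set.range e ⊆ g.edges := by
      rintro _ ⟨p, ⟨k, rfl⟩, rfl⟩; exact hedges k
    have hminj : Function.Injective (mEdge f) := by
      intro a b hab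
      have h1 : f a.1 = f b.1 := congrArg Prod.fst hab
      have h2 : f a.2 = f b.2 := congrArg Prod.snd hab
      exact Prod.ext_iff.mpr ⟨hinj h1, hinj h2⟩
    have hcard : g.edges.ncard ≤ (mEdge f '' Set.range e).ncard := by
      rw [Set.ncard_image_of_injective _ hminj, hE]
    exact (Set.eq_of_subset_of_ncard_le hsubset hcard (Set.toFinite _)).symm
  have hunion : R (Set.range e) Ecur \ R (Set.range e) Eprev = ⋃ i, S i := by
    ext g
    constructor
    · rintro ⟨hgR, hgnot⟩
      obtain ⟨f, hf, huniq⟩ := hUnique g hgR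
      have hedges_eq := key g hgR f hf
      obtain ⟨hsub, ⟨f0, hf0⟩, hv, hE⟩ := hgR
      have hex : ∃ k, mEdge f (e k) ∉ Eprev := by
        by_contra h
        push_neg at h
        apply hgnot
        refine ⟨⟨?_, hsub.2⟩, ⟨f, hf.1, fun p hp => ?_⟩, hv, hE⟩
        · rw [hedges_eq]; rintro _ ⟨p, ⟨k, rfl⟩, rfl⟩; exact h k
        · obtain ⟨k, rfl⟩ := hp; exact hf.2.1 k
      let T : Finset (Fin m) := Finset.univ.filter (fun k => mEdge f (e k) ∉ Eprev)
      have hTne : T.Nonempty := ⟨hex.choose, by simp [T, hex.choose_spec]⟩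
      refine Set.mem_iUnion.2 ⟨T.max' hTne, hsub, ⟨f, hf, ⟨?_, ?_⟩, ?_⟩, hv, by rw [hE, hm]⟩
      · exact hsub.1 (hf.2.1 (T.max' hTne))
      · have := T.max'_mem hTne
        simp only [T, Finset.mem_filter] at this
        exact this.2
      · intro k hk
        refine ⟨hsub.1 (hf.2.1 k), ?_⟩
        by_contra hkP
        have hkT : k ∈ T := by simp [T, hkP]
        exact absurd (T.le_max' k hkT) (not_le.mpr hk)
    · intro hg
      obtain ⟨i, hgi⟩ := Set.mem_iUnion.1 hg
      refine ⟨hSsub i hgi, fun hgP => ?_⟩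
      obtain ⟨_, ⟨f, hf, hdelta, _⟩, _, _⟩ := hgi
      exact hdelta.2 (hgP.1.1 (hf.2.1 i))
  have hdisj : Pairwise fun i j => Disjoint (S i) (S j) := by
    intro i j hij
    rw [Set.disjoint_left]
    rintro g ⟨hsub, ⟨fi, hfi, hdi, hli⟩, hv, hE⟩ ⟨_, ⟨fj, hfj, hdj, hlj⟩, _, _⟩
    have hgR := hSsub i ⟨hsub, ⟨fi, hfi, hdi, hli⟩, hv, hE⟩
    obtain ⟨f, _, huniq⟩ := hUnique g hgR
    have h1 := huniq fi hfi
    have h2 := huniq fj hfj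
    subst h1
    rcases hij.lt_or_gt with h | h
    · exact hdj.2 ((h2 ▸ hli j h).2)
    · exact hdi.2 ((h2 ▸ hlj i h).2)
  rw [hunion, aux_ncard_iUnion S hdisj]
end

section
/- Let f and f' be two incremental matches of incremental pattern graphs ΔP_a and ΔP_b (a ≠ b) respectively, both in snapshot G_t, both satisfying the symmetry-breaking partial order, and suppose they have the same image subgraph g. Then f = f', and this yields a contradiction: the edge e_b^P = (s_b, t_b) with b > a is mapped by f to an unaltered edge (by τ_a) and by f' to a delta edge (by τ_b), which is impossible since an edge of G_t cannot be both unaltered and delta. -/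
/-- under symmetry-breaking uniqueness of order-respecting matches, no
subgraph `g` of `G_t` is simultaneously isomorphic (via order-respecting incremental
matches) to two distinct incremental pattern graphs `ΔP_a` and `ΔP_b` (`a ≠ b`):
otherwise the two matches would coincide and map the edge `e_b` both to an unaltered
edge and to a delta edge, which is impossible. -/
theorem stmt17 {U V : Type*} [Finite V] {m : ℕ} (e : Fin m → U × U)
    (he : Function.Injective e) (ltP : U → U → Prop) (prec : V → V → Prop)
    (Eprev Ecur : Set (V × V))
    (hUnique : ∀ g : SubG V, ∀ f f' : U → V,
      OrdMatchInto e ltP prec g f → OrdMatchInto e ltP prec g f' → f = f') :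
    ∀ a b : Fin m, a ≠ b →
      ¬∃ g : SubG V,
        g ∈ DeltaROrd e ltP prec Ecur Eprev a ∧
        g ∈ DeltaROrd e ltP prec Ecur Eprev b := by
  have key : ∀ a b : Fin m, a < b →
      ¬∃ g : SubG V,
        g ∈ DeltaROrd e ltP prec Ecur Eprev a ∧
        g ∈ DeltaROrd e ltP prec Ecur Eprev b := by
    rintro a b hab ⟨g, ⟨-, ⟨f, hf, -, hlater⟩, -⟩, ⟨-, ⟨f', hf', hdelta, -⟩, -⟩⟩
    have : f = f' := hUnique g f f' hf hf'
    subst this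
    exact hdelta.2 (hlater b hab).2
  intro a b hab
  rcases lt_or_gt_of_ne hab with h | h
  · exact key a b h
  · intro ⟨g, h1, h2⟩; exact key b a h ⟨g, h2, h1⟩
end
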